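/- Every double coset HuH in S_{2n}, where H is the subgroup preserving each pair {2i-1,2i}, contains exactly one element v satisfying v(2i) > v(2i-1) and v⁻¹(2i) > v⁻¹(2i-1) for all i = 1,...,n. -/

import Mathlib

/-- The equivalence `Fin n × Fin 2 ≃ Fin (2*n)`, `(a, b) ↦ 2a + b`. -/
def pairFinEquiv (n : ℕ) : Fin n × Fin 2 ≃ Fin (2 * n) where
  toFun p := ⟨2 * p.1.1 + p.2.1, by have h1 := p.1.2; have h2 := p.2.2; omega⟩
  invFun i := (⟨i.1 / 2, by have := i.2; omega⟩, ⟨i.1 % 2, by omega⟩)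
  left_inv := by
    rintro ⟨⟨a, ha⟩, ⟨b, hb⟩⟩
    simp only [Prod.mk.injEq]
    constructor <;> apply Fin.ext <;> simp <;> omega
  right_inv := by
    rintro ⟨i, hi⟩
    apply Fin.ext
    simp
    omega

/-- The doubling map `w ↦ w̃`, sending a permutation of `{0, …, n-1}` to the permutation of
`{0, …, 2n-1}` with `w̃(2i) = 2w(i)` and `w̃(2i+1) = 2w(i)+1` (the zero-based version of
`w̃(2i) = 2w(i)`, `w̃(2i-1) = 2w(i)-1`). -/
def double {n : ℕ} (w : Equiv.Perm (Fin n)) : Equiv.Perm (Fin (2 * n)) :=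
  (pairFinEquiv n).permCongr (Equiv.prodCongr w (Equiv.refl (Fin 2)))

/-- The number of inversions of a permutation, i.e. its Coxeter length. -/
noncomputable def invLength {n : ℕ} (u : Equiv.Perm (Fin n)) : ℕ :=
  Set.ncard { p : Fin n × Fin n | p.1 < p.2 ∧ u p.2 < u p.1 }

/-- Bruhat order on the symmetric group: the reflexive-transitive closure of the relation
`a → a * t` where `t` is a transposition and `ℓ(a * t) > ℓ(a)`. -/
def BruhatLE {n : ℕ} (x w : Equiv.Perm (Fin n)) : Prop :=
  Relation.ReflTransGen
    (fun a b => (∃ i j : Fin n, b = a * Equiv.swap i j) ∧ invLength a < invLength b) x w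

/-- The subgroup `H` of `S_{2n}` of permutations preserving each pair `{2i, 2i+1}`. -/
def pairSubgroup (n : ℕ) : Subgroup (Equiv.Perm (Fin (2 * n))) where
  carrier := { u | ∀ i, (u i).1 / 2 = i.1 / 2 }
  one_mem' := by intro i; rfl
  mul_mem' := by
    intro a b ha hb i
    rw [Equiv.Perm.mul_apply, ha, hb]
  inv_mem' := by
    intro a ha i
    have h := ha (a⁻¹ i)
    rw [show a (a⁻¹ i) = i by simp] at h
    omega

/-- The subgroup `K` of `S_{2n}` of parity-preserving permutations. -/
def paritySubgroup (n : ℕ) : Subgroup (Equiv.Perm (Fin (2 * n))) where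
  carrier := { u | ∀ i, (u i).1 % 2 = i.1 % 2 }
  one_mem' := by intro i; rfl
  mul_mem' := by
    intro a b ha hb i
    rw [Equiv.Perm.mul_apply, ha, hb]
  inv_mem' := by
    intro a ha i
    have h := ha (a⁻¹ i)
    rw [show a (a⁻¹ i) = i by simp] at h
    omega

/-- A permutation of `{0,…,2n-1}` is bi-`H`-reduced if it is increasing on each pair
`{2i, 2i+1}` and so is its inverse. -/
def BiReduced {n : ℕ} (v : Equiv.Perm (Fin (2 * n))) : Prop :=
  ∀ i : Fin n,
    v ⟨2 * i.1, by have := i.2; omega⟩ < v ⟨2 * i.1 + 1, by have := i.2; omega⟩ ∧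
    v⁻¹ ⟨2 * i.1, by have := i.2; omega⟩ < v⁻¹ ⟨2 * i.1 + 1, by have := i.2; omega⟩

/-- Membership of `v` in the double coset `H x H` of `H = pairSubgroup n`. -/
def InPairDoubleCoset {n : ℕ} (x v : Equiv.Perm (Fin (2 * n))) : Prop :=
  ∃ h₁ ∈ pairSubgroup n, ∃ h₂ ∈ pairSubgroup n, v = h₁ * x * h₂

/-- The matrix attached to a double coset `HuH`: the `(i,j)` entry is
`#({2i, 2i+1} ∩ u({2j, 2j+1}))`. -/
noncomputable def cosetMatrix {n : ℕ} (u : Equiv.Perm (Fin (2 * n))) :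
    Matrix (Fin n) (Fin n) ℕ :=
  fun i j => Set.ncard { k : Fin (2 * n) | k.1 / 2 = j.1 ∧ (u k).1 / 2 = i.1 }

/-- The simple reflection `s_j = (j, j+1)` of `S_n` (zero-based). -/
def sRefl {n : ℕ} (j : {j : ℕ // j + 1 < n}) : Equiv.Perm (Fin n) :=
  Equiv.swap ⟨j.1, Nat.lt_of_succ_lt j.2⟩ ⟨j.1 + 1, j.2⟩

/-- A Boolean permutation: a product of distinct simple reflections. -/
def BooleanPerm {n : ℕ} (w : Equiv.Perm (Fin n)) : Prop :=
  ∃ js : List {j : ℕ // j + 1 < n}, (js.map Subtype.val).Nodup ∧ w = (js.map sRefl).prod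

/-- `w` avoids the pattern `(321)`. -/
def Avoids321 {n : ℕ} (w : Equiv.Perm (Fin n)) : Prop :=
  ¬ ∃ i j k : Fin n, i < j ∧ j < k ∧ w k < w j ∧ w j < w i

/-- `w` avoids the pattern `(3412)`. -/
def Avoids3412 {n : ℕ} (w : Equiv.Perm (Fin n)) : Prop :=
  ¬ ∃ i j k l : Fin n, i < j ∧ j < k ∧ k < l ∧ w k < w l ∧ w l < w i ∧ w i < w j

/-- `w` avoids the pattern `(4231)`. -/
def Avoids4231 {n : ℕ} (w : Equiv.Perm (Fin n)) : Prop :=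
  ¬ ∃ i j k l : Fin n, i < j ∧ j < k ∧ k < l ∧ w l < w j ∧ w j < w k ∧ w k < w i


/-! An element of `H` fixes or swaps each pair `{2i, 2i+1}`, so precomposing a function that is
weakly increasing on every pair with an element of `H` either leaves it unchanged or destroys
this monotonicity. For bi-reduced `v` and `w = h₁ v h₂` this applies first to `⌊v(·)/2⌋`, which
`h₁` does not see, giving `⌊w(·)/2⌋ = ⌊v(·)/2⌋`, i.e. `w ∈ H v`, and then to `v⁻¹`, giving
`w = v`. Conversely, sorting each pair of the domain by the block of its image, and then each
pair of the codomain by its preimage, produces a bi-reduced element of `HuH`. -/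

section Pairs

variable {n : ℕ}

def pairOf (k : Fin (2 * n)) : Fin n := ⟨k.1 / 2, by have := k.2; omega⟩

def pairLo (i : Fin n) : Fin (2 * n) := ⟨2 * i.1, by have := i.2; omega⟩

def pairHi (i : Fin n) : Fin (2 * n) := ⟨2 * i.1 + 1, by have := i.2; omega⟩

@[simp]
lemma pairOf_pairLo (i : Fin n) : pairOf (pairLo i) = i := by
  ext; simp [pairOf, pairLo]

@[simp]
lemma pairOf_pairHi (i : Fin n) : pairOf (pairHi i) = i := by
  ext; simp [pairOf, pairHi]; omega

lemma pairLo_lt_pairHi (i : Fin n) : pairLo i < pairHi i := by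
  simp [pairLo, pairHi, Fin.lt_def]

@[simp]
lemma pairHi_ne_pairLo (i : Fin n) : pairHi i ≠ pairLo i :=
  (pairLo_lt_pairHi i).ne'

lemma eq_pairLo_or_eq_pairHi (k : Fin (2 * n)) : k = pairLo (pairOf k) ∨ k = pairHi (pairOf k) := by
  simp only [Fin.ext_iff, pairLo, pairHi, pairOf]; omega

@[elab_as_elim]
lemma pair_induction {P : Fin (2 * n) → Prop} (lo : ∀ i, P (pairLo i)) (hi : ∀ i, P (pairHi i))
    (k : Fin (2 * n)) : P k := by
  rcases eq_pairLo_or_eq_pairHi k with hk | hk <;> rw [hk]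
  exacts [lo _, hi _]

lemma eq_pairLo_or_eq_pairHi_of_pairOf_eq {k : Fin (2 * n)} {i : Fin n} (h : pairOf k = i) :
    k = pairLo i ∨ k = pairHi i :=
  h ▸ eq_pairLo_or_eq_pairHi k

lemma eq_pairLo_and_eq_pairHi_of_lt {a b : Fin (2 * n)} (hab : a < b) (h : pairOf a = pairOf b) :
    a = pairLo (pairOf a) ∧ b = pairHi (pairOf a) := by
  simp only [Fin.ext_iff, Fin.lt_def, pairOf, pairLo, pairHi] at hab h ⊢; omega

lemma pairOf_monotone : Monotone (pairOf : Fin (2 * n) → Fin n) := fun a b hab => by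
  simp only [pairOf, Fin.le_def] at hab ⊢; omega

lemma mem_pairSubgroup_iff {h : Equiv.Perm (Fin (2 * n))} :
    h ∈ pairSubgroup n ↔ ∀ k, pairOf (h k) = pairOf k := by
  simp only [pairOf, Fin.ext_iff]; rfl

lemma pairOf_comp_mul_of_mem_pairSubgroup {h : Equiv.Perm (Fin (2 * n))} (hh : h ∈ pairSubgroup n)
    (v : Equiv.Perm (Fin (2 * n))) : pairOf ∘ ⇑(h * v) = pairOf ∘ v :=
  funext fun k => mem_pairSubgroup_iff.mp hh (v k)

lemma mem_pairSubgroup_of_pairOf_comp_eq {v w : Equiv.Perm (Fin (2 * n))}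
    (h : pairOf ∘ w = pairOf ∘ v) : w * v⁻¹ ∈ pairSubgroup n :=
  mem_pairSubgroup_iff.mpr fun k => by simpa using congrFun h (v⁻¹ k)

lemma mem_pairSubgroup_fixes_or_swaps {h : Equiv.Perm (Fin (2 * n))} (hh : h ∈ pairSubgroup n)
    (i : Fin n) :
    (h (pairLo i) = pairLo i ∧ h (pairHi i) = pairHi i) ∨
      (h (pairLo i) = pairHi i ∧ h (pairHi i) = pairLo i) := by
  have hlo := eq_pairLo_or_eq_pairHi_of_pairOf_eq
    ((mem_pairSubgroup_iff.mp hh (pairLo i)).trans (pairOf_pairLo i))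
  have hhi := eq_pairLo_or_eq_pairHi_of_pairOf_eq
    ((mem_pairSubgroup_iff.mp hh (pairHi i)).trans (pairOf_pairHi i))
  have hne : h (pairLo i) ≠ h (pairHi i) := h.injective.ne (pairHi_ne_pairLo i).symm
  rcases hlo with hlo | hlo <;> rcases hhi with hhi | hhi <;> simp_all

end Pairs

section PairMonotone

variable {n : ℕ} {α : Type*}

def PairMonotone [Preorder α] (f : Fin (2 * n) → α) : Prop :=
  ∀ i, f (pairLo i) ≤ f (pairHi i)

lemma PairMonotone.comp_monotone [Preorder α] {β : Type*} [Preorder β] {f : Fin (2 * n) → α}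
    {g : α → β} (hf : PairMonotone f) (hg : Monotone g) : PairMonotone (g ∘ f) :=
  fun i => hg (hf i)

lemma biReduced_iff {v : Equiv.Perm (Fin (2 * n))} :
    BiReduced v ↔ PairMonotone v ∧ PairMonotone ⇑v⁻¹ := by
  have hne : ∀ (e : Equiv.Perm (Fin (2 * n))) (i : Fin n), e (pairLo i) ≠ e (pairHi i) :=
    fun e i => e.injective.ne (pairHi_ne_pairLo i).symm
  exact ⟨fun h => ⟨fun i => (h i).1.le, fun i => (h i).2.le⟩,
    fun h i => ⟨(h.1 i).lt_of_ne (hne v i), (h.2 i).lt_of_ne (hne v⁻¹ i)⟩⟩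

lemma PairMonotone.comp_eq_of_mem_pairSubgroup [PartialOrder α] {f : Fin (2 * n) → α}
    {h : Equiv.Perm (Fin (2 * n))} (hh : h ∈ pairSubgroup n) (hf : PairMonotone f)
    (hfh : PairMonotone (f ∘ h)) : f ∘ h = f := by
  suffices ∀ i, f (h (pairLo i)) = f (pairLo i) ∧ f (h (pairHi i)) = f (pairHi i) from
    funext (pair_induction (fun i => (this i).1) (fun i => (this i).2))
  intro i
  obtain ⟨hlo, hhi⟩ | ⟨hlo, hhi⟩ := mem_pairSubgroup_fixes_or_swaps hh i
  · simp [hlo, hhi]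
  · have hflat := le_antisymm (hf i) (by simpa [hlo, hhi] using hfh i)
    simp [hlo, hhi, hflat]

def pairFlipFun (s : Finset (Fin n)) (k : Fin (2 * n)) : Fin (2 * n) :=
  if pairOf k ∈ s then (if k = pairLo (pairOf k) then pairHi (pairOf k) else pairLo (pairOf k))
  else k

@[simp]
lemma pairFlipFun_pairLo (s : Finset (Fin n)) (i : Fin n) :
    pairFlipFun s (pairLo i) = if i ∈ s then pairHi i else pairLo i := by
  simp [pairFlipFun]

@[simp]
lemma pairFlipFun_pairHi (s : Finset (Fin n)) (i : Fin n) :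
    pairFlipFun s (pairHi i) = if i ∈ s then pairLo i else pairHi i := by
  simp [pairFlipFun]

lemma pairFlipFun_involutive (s : Finset (Fin n)) : Function.Involutive (pairFlipFun s) := by
  intro k
  induction k using pair_induction <;> simp only [pairFlipFun_pairLo, pairFlipFun_pairHi] <;>
    split_ifs <;> simp_all

def pairFlip (s : Finset (Fin n)) : Equiv.Perm (Fin (2 * n)) :=
  (pairFlipFun_involutive s).toPerm

lemma pairFlip_mem_pairSubgroup (s : Finset (Fin n)) : pairFlip s ∈ pairSubgroup n := by
  refine mem_pairSubgroup_iff.mpr fun k => ?_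
  induction k using pair_induction <;>
    simp only [pairFlip, Function.Involutive.coe_toPerm, pairFlipFun_pairLo, pairFlipFun_pairHi] <;>
    split_ifs <;> simp

lemma exists_pairMonotone_comp [LinearOrder α] (f : Fin (2 * n) → α) :
    ∃ h ∈ pairSubgroup n, PairMonotone (f ∘ h) := by
  classical
  refine ⟨pairFlip {i | f (pairHi i) < f (pairLo i)}, pairFlip_mem_pairSubgroup _, fun i => ?_⟩
  simp only [pairFlip, Function.comp_apply, Function.Involutive.coe_toPerm, pairFlipFun_pairLo,
    pairFlipFun_pairHi, Finset.mem_filter, Finset.mem_univ, true_and]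
  split_ifs with h
  · exact h.le
  · exact not_lt.mp h

end PairMonotone

section DoubleCoset

variable {n : ℕ}

lemma InPairDoubleCoset.symm {x v : Equiv.Perm (Fin (2 * n))} (h : InPairDoubleCoset x v) :
    InPairDoubleCoset v x := by
  obtain ⟨a, ha, b, hb, rfl⟩ := h
  exact ⟨a⁻¹, inv_mem ha, b⁻¹, inv_mem hb, by group⟩

lemma InPairDoubleCoset.trans {x y z : Equiv.Perm (Fin (2 * n))} (hxy : InPairDoubleCoset x y)
    (hyz : InPairDoubleCoset y z) : InPairDoubleCoset x z := by
  obtain ⟨a, ha, b, hb, rfl⟩ := hxy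
  obtain ⟨c, hc, d, hd, rfl⟩ := hyz
  exact ⟨c * a, mul_mem hc ha, b * d, mul_mem hb hd, by group⟩

lemma biReduced_of_pairMonotone {v : Equiv.Perm (Fin (2 * n))}
    (hv : PairMonotone (pairOf ∘ v)) (hvinv : PairMonotone ⇑v⁻¹) : BiReduced v := by
  refine biReduced_iff.mpr ⟨fun i => ?_, hvinv⟩
  by_contra! hlt
  -- `v` reverses pair `i` only if it maps it onto a single pair `j`, and then `v⁻¹` reverses `j`
  obtain ⟨hlo, hhi⟩ := eq_pairLo_and_eq_pairHi_of_lt hlt (pairOf_monotone hlt.le |>.antisymm (hv i))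
  have := hvinv (pairOf (v (pairHi i)))
  rw [← hlo, ← hhi] at this
  simp only [Equiv.Perm.coe_inv, Equiv.symm_apply_apply] at this
  exact this.not_gt (pairLo_lt_pairHi i)

lemma exists_biReduced_inPairDoubleCoset (u : Equiv.Perm (Fin (2 * n))) :
    ∃ v, InPairDoubleCoset u v ∧ BiReduced v := by
  obtain ⟨h₂, hh₂, hmono⟩ := exists_pairMonotone_comp (pairOf ∘ u)
  obtain ⟨h₁, hh₁, hinv⟩ := exists_pairMonotone_comp ⇑(u * h₂)⁻¹
  refine ⟨h₁⁻¹ * u * h₂, ⟨h₁⁻¹, inv_mem hh₁, h₂, hh₂, rfl⟩, biReduced_of_pairMonotone ?_ ?_⟩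
  · rwa [mul_assoc, pairOf_comp_mul_of_mem_pairSubgroup (inv_mem hh₁)]
  · rwa [mul_assoc, mul_inv_rev, inv_inv, Equiv.Perm.coe_mul]

lemma BiReduced.eq_of_inPairDoubleCoset {v w : Equiv.Perm (Fin (2 * n))} (hv : BiReduced v)
    (hw : BiReduced w) (hvw : InPairDoubleCoset v w) : w = v := by
  obtain ⟨h₁, hh₁, h₂, hh₂, hw_eq⟩ := hvw
  rw [biReduced_iff] at hv hw
  have hwv : pairOf ∘ w = (pairOf ∘ v) ∘ h₂ := by
    rw [hw_eq, mul_assoc, pairOf_comp_mul_of_mem_pairSubgroup hh₁]; rfl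
  have hpair : pairOf ∘ w = pairOf ∘ v :=
    hwv.trans <| (hv.1.comp_monotone pairOf_monotone).comp_eq_of_mem_pairSubgroup hh₂
      (hwv ▸ hw.1.comp_monotone pairOf_monotone)
  have hmem : v * w⁻¹ ∈ pairSubgroup n := mem_pairSubgroup_of_pairOf_comp_eq hpair.symm
  have hinv : ⇑w⁻¹ = ⇑v⁻¹ ∘ ⇑(v * w⁻¹) := by rw [← Equiv.Perm.coe_mul, inv_mul_cancel_left]
  have := hv.2.comp_eq_of_mem_pairSubgroup hmem (hinv ▸ hw.2)
  exact inv_injective (DFunLike.coe_injective (hinv.trans this))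

end DoubleCoset

/-- Every double coset `HuH` contains a unique bi-`H`-reduced element. -/
theorem stmt6 (n : ℕ) (u : Equiv.Perm (Fin (2 * n))) :
    ∃! v : Equiv.Perm (Fin (2 * n)), InPairDoubleCoset u v ∧ BiReduced v := by
  obtain ⟨v, hv, hvr⟩ := exists_biReduced_inPairDoubleCoset u
  exact ⟨v, ⟨hv, hvr⟩, fun w ⟨hw, hwr⟩ => hvr.eq_of_inPairDoubleCoset hwr (hv.symm.trans hw)⟩
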